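/- For all real numbers x₁, x₂ with 0 < x₁ ≤ 1 and 0 < x₂: ∫_{x₁}^1 ∫_{x₂}^{3x₂} z₁ z₂ / (z₁² + z₂²)² dz₂ dz₁ ≤ (1/2) log 3. -/

import Mathlib

open MeasureTheory Set

/-! Over `[a, d] × [b, c]` the double integral is explicit: in `z₂` the integrand has the
antiderivative `-z₁ / (2 (z₁² + z₂²))`, and the resulting function of `z₁` has the antiderivative
`(log (z₁² + b²) - log (z₁² + c²)) / 4`. This antiderivative is nonpositive, so only its value at
the lower endpoint counts, and `(a² + c²) / (a² + b²) ≤ c² / b²` bounds that by `log (c / b) / 2`.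
-/

theorem lintegral_Icc_ofReal_eq_sub_of_hasDerivAt {f F : ℝ → ℝ} {a b : ℝ} (hab : a ≤ b)
    (hF : ∀ x ∈ Icc a b, HasDerivAt F (f x) x) (hf : ContinuousOn f (Icc a b))
    (hf₀ : ∀ x ∈ Icc a b, 0 ≤ f x) :
    ∫⁻ x in Icc a b, ENNReal.ofReal (f x) = ENNReal.ofReal (F b - F a) := by
  rw [← ofReal_integral_eq_lintegral_ofReal hf.integrableOn_Icc
    ((ae_restrict_iff' measurableSet_Icc).2 (ae_of_all _ hf₀)), integral_Icc_eq_integral_Ioc,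
    ← intervalIntegral.integral_of_le hab]
  refine congrArg _ (intervalIntegral.integral_eq_sub_of_hasDerivAt (fun x hx => ?_)
    (hf.intervalIntegrable_of_Icc hab))
  exact hF x (uIcc_of_le hab ▸ hx)

theorem hasDerivAt_neg_div_two_mul_sq_add_sq {a : ℝ} (ha : a ≠ 0) (t : ℝ) :
    HasDerivAt (fun t => -a / (2 * (a ^ 2 + t ^ 2))) (a * t / (a ^ 2 + t ^ 2) ^ 2) t := by
  have hsq : HasDerivAt (fun t => 2 * (a ^ 2 + t ^ 2)) (2 * (2 * t)) t := by
    simpa using ((hasDerivAt_pow 2 t).const_add (a ^ 2)).const_mul 2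
  refine ((hasDerivAt_const t (-a)).div hsq (by positivity)).congr_deriv ?_
  have : a ^ 2 + t ^ 2 ≠ 0 := by positivity
  field_simp
  ring

theorem hasDerivAt_log_sq_add_sq_sub_log_sq_add_sq {b c : ℝ} (hb : b ≠ 0) (hc : c ≠ 0)
    (t : ℝ) :
    HasDerivAt (fun t => (Real.log (t ^ 2 + b ^ 2) - Real.log (t ^ 2 + c ^ 2)) / 4)
      (t / (2 * (t ^ 2 + b ^ 2)) - t / (2 * (t ^ 2 + c ^ 2))) t := by
  have hsq : HasDerivAt (fun t : ℝ => t ^ 2) (2 * t) t := by simpa using hasDerivAt_pow 2 t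
  refine ((((hsq.add_const (b ^ 2)).log (by positivity)).sub
    ((hsq.add_const (c ^ 2)).log (by positivity))).div_const 4).congr_deriv ?_
  have : t ^ 2 + b ^ 2 ≠ 0 := by positivity
  have : t ^ 2 + c ^ 2 ≠ 0 := by positivity
  field_simp
  ring

theorem lintegral_Icc_mul_div_sq_add_sq_sq {a b c : ℝ} (ha : 0 < a) (hb : 0 ≤ b)
    (hbc : b ≤ c) :
    ∫⁻ t in Icc b c, ENNReal.ofReal (a * t / (a ^ 2 + t ^ 2) ^ 2) =
      ENNReal.ofReal (a / (2 * (a ^ 2 + b ^ 2)) - a / (2 * (a ^ 2 + c ^ 2))) := by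
  rw [lintegral_Icc_ofReal_eq_sub_of_hasDerivAt hbc
    (fun t _ => hasDerivAt_neg_div_two_mul_sq_add_sq ha.ne' t)
    (by fun_prop (disch := intros; positivity))
    (fun t ht => by have := hb.trans ht.1; positivity)]
  congr 1
  ring

theorem lintegral_Icc_lintegral_Icc_mul_div_sq_add_sq_sq {a d b c : ℝ} (ha : 0 < a)
    (had : a ≤ d) (hb : 0 < b) (hbc : b ≤ c) :
    ∫⁻ z₁ in Icc a d, ∫⁻ z₂ in Icc b c, ENNReal.ofReal (z₁ * z₂ / (z₁ ^ 2 + z₂ ^ 2) ^ 2) =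
      ENNReal.ofReal ((Real.log (d ^ 2 + b ^ 2) - Real.log (d ^ 2 + c ^ 2)) / 4 -
        (Real.log (a ^ 2 + b ^ 2) - Real.log (a ^ 2 + c ^ 2)) / 4) := by
  have hc : 0 < c := hb.trans_le hbc
  rw [setLIntegral_congr_fun measurableSet_Icc
    (fun z hz => lintegral_Icc_mul_div_sq_add_sq_sq (ha.trans_le hz.1) hb.le hbc)]
  refine lintegral_Icc_ofReal_eq_sub_of_hasDerivAt had
    (fun t _ => hasDerivAt_log_sq_add_sq_sub_log_sq_add_sq hb.ne' hc.ne' t)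
    (by fun_prop (disch := intros; positivity)) (fun t ht => ?_)
  have ht : 0 ≤ t := ha.le.trans ht.1
  exact sub_nonneg.2 (div_le_div_of_nonneg_left ht (by positivity) (by gcongr))

theorem log_sq_add_sq_sub_log_sq_add_sq_le {a b c : ℝ} (hb : 0 < b) (hbc : b ≤ c) :
    Real.log (a ^ 2 + c ^ 2) - Real.log (a ^ 2 + b ^ 2) ≤ 2 * Real.log (c / b) := by
  have hc : 0 < c := hb.trans_le hbc
  rw [← Real.log_div (by positivity) (by positivity), two_mul,
    ← Real.log_mul (by positivity) (by positivity), ← sq]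
  refine Real.log_le_log (by positivity) ?_
  rw [div_pow, div_le_div_iff₀ (by positivity) (by positivity)]
  nlinarith [mul_le_mul_of_nonneg_left (pow_le_pow_left₀ hb.le hbc 2) (sq_nonneg a)]

theorem lintegral_Icc_lintegral_Icc_mul_div_sq_add_sq_sq_le {a d b c : ℝ} (ha : 0 < a)
    (had : a ≤ d) (hb : 0 < b) (hbc : b ≤ c) :
    ∫⁻ z₁ in Icc a d, ∫⁻ z₂ in Icc b c, ENNReal.ofReal (z₁ * z₂ / (z₁ ^ 2 + z₂ ^ 2) ^ 2) ≤
      ENNReal.ofReal (Real.log (c / b) / 2) := by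
  rw [lintegral_Icc_lintegral_Icc_mul_div_sq_add_sq_sq ha had hb hbc]
  refine ENNReal.ofReal_le_ofReal ?_
  have hd : Real.log (d ^ 2 + b ^ 2) ≤ Real.log (d ^ 2 + c ^ 2) :=
    Real.log_le_log (by positivity) (by gcongr)
  linarith [log_sq_add_sq_sub_log_sq_add_sq_le (a := a) hb hbc]

/-- **Elementary integral bound (Zlatoš, proof of Lemma 2.1).**  For 0 < x₁ ≤ 1 and
0 < x₂, ∫_{x₁}^1 ∫_{x₂}^{3x₂} z₁z₂/(z₁²+z₂²)² dz₂ dz₁ ≤ (1/2) log 3. -/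
theorem shifted_corner_integral_bound (x₁ x₂ : ℝ) (hx₁ : 0 < x₁) (hx₁' : x₁ ≤ 1)
    (hx₂ : 0 < x₂) :
    (∫⁻ z₁ in Set.Icc x₁ 1, ∫⁻ z₂ in Set.Icc x₂ (3 * x₂),
        ENNReal.ofReal (z₁ * z₂ / (z₁ ^ 2 + z₂ ^ 2) ^ 2)) ≤
      ENNReal.ofReal (1 / 2 * Real.log 3) := by
  have h := lintegral_Icc_lintegral_Icc_mul_div_sq_add_sq_sq_le (c := 3 * x₂)
    hx₁ hx₁' hx₂ (by linarith)
  rwa [mul_div_cancel_right₀ _ hx₂.ne', ← one_div_mul_eq_div] at h
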